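/- arXiv:1809.10195 — 3 statements merged into one kernel-verified Lean document; each statement's English description precedes it below -/
import Mathlib

section
/- Let p be an odd prime and G a finite group. If G is tame-decoupled, then G is x₀-constrained. -/
open scoped Pointwise

/-- The `p`-core of `G`: the intersection of all Sylow `p`-subgroups. -/
def pCore (p : ℕ) (G : Type*) [Group G] : Subgroup G :=
  ⨅ P : Sylow p G, (P : Subgroup G)

instance pCore_normal (p : ℕ) (G : Type*) [Group G] : (pCore p G).Normal := by
  constructor
  intro x hx g
  rw [pCore, Subgroup.mem_iInf] at hx ⊢
  intro P
  have h := hx (g⁻¹ • P)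
  rw [Sylow.coe_subgroup_smul, Subgroup.mem_pointwise_smul_iff_inv_smul_mem] at h
  simpa [MulAut.conj] using h

/-- `W = V^p⋅[V,V]`, the Frattini subgroup of the `p`-core `V`, as a subgroup of `G`. -/
def pFrattini (p : ℕ) (G : Type*) [Group G] : Subgroup G :=
  Subgroup.closure ((fun v => v ^ p) '' (pCore p G : Set G)) ⊔ ⁅pCore p G, pCore p G⁆

instance pFrattini_normal (p : ℕ) (G : Type*) [Group G] : (pFrattini p G).Normal := by
  have h1 : (Subgroup.closure ((fun v => v ^ p) '' (pCore p G : Set G))).Normal := by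
    constructor
    intro x hx g
    induction hx using Subgroup.closure_induction'' with
    | one => simpa using Subgroup.one_mem _
    | mem y hy =>
        obtain ⟨v, hv, rfl⟩ := hy
        refine Subgroup.subset_closure ⟨g * v * g⁻¹, (pCore_normal p G).conj_mem v hv g, ?_⟩
        simp [conj_pow]
    | inv_mem y hy =>
        obtain ⟨v, hv, rfl⟩ := hy
        have : g * (v ^ p)⁻¹ * g⁻¹ = ((g * v * g⁻¹) ^ p)⁻¹ := by
          rw [conj_pow]; group
        rw [this]
        exact Subgroup.inv_mem _ (Subgroup.subset_closure
          ⟨g * v * g⁻¹, (pCore_normal p G).conj_mem v hv g, by simp [conj_pow]⟩)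
    | mul y z _ _ hy hz =>
        have : g * (y * z) * g⁻¹ = (g * y * g⁻¹) * (g * z * g⁻¹) := by group
        rw [this]
        exact Subgroup.mul_mem _ hy hz
  have h2 : (⁅pCore p G, pCore p G⁆ : Subgroup G).Normal := Subgroup.commutator_normal _ _
  exact Subgroup.sup_normal _ _

/-- `⟨x, y⟩ = (x^{h^{p-1}} y ⋅ x^{h^{p-2}} y ⋯ x^{h} y)^{a}`. -/
def tameBracket (p : ℕ) (h a : ℤ) {G : Type*} [Group G] (x y : G) : G :=
  (((List.range (p - 1)).map fun i => x ^ (h ^ (p - 1 - i)) * y).prod) ^ a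

/-- Membership in `T_G`: the tame relation holds and the images of `σ, τ` generate `G/V`. -/
def MemTG (p : ℕ) {G : Type*} [Group G] (σ τ : G) : Prop :=
  σ⁻¹ * τ * σ = τ ^ p ∧ Subgroup.closure {σ, τ} ⊔ pCore p G = ⊤

/-- `G` is tame-decoupled if `τ` acts trivially on `V/W` for every `(σ,τ) ∈ T_G`. -/
def IsTameDecoupled (p : ℕ) (G : Type*) [Group G] : Prop :=
  ∀ σ τ : G, MemTG p σ τ → ∀ v ∈ pCore p G, τ⁻¹ * v * τ * v⁻¹ ∈ pFrattini p G

/-- `G` is `x₀`-constrained if `x₀^σ⋅⟨x₀,τ⟩⁻¹ ∈ W` implies `x₀ ∈ W`,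
for all `(σ,τ) ∈ T_G` and `x₀ ∈ V`. -/
def IsXConstrained (p : ℕ) (h a : ℤ) (G : Type*) [Group G] : Prop :=
  ∀ σ τ : G, MemTG p σ τ → ∀ x₀ ∈ pCore p G,
    σ⁻¹ * x₀ * σ * (tameBracket p h a x₀ τ)⁻¹ ∈ pFrattini p G → x₀ ∈ pFrattini p G


/-!
Modulo `W`, the element `x₀` has order dividing `p` and commutes with `τ` (tame-decoupling), so
`⟨x₀, τ⟩ ≡ x₀ ^ (S a) τ ^ ((p - 1) a)` with `S = ∑ h ^ i`. As `h` is a primitive `(p-1)`-st root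
of unity mod `p`, `p ∣ S`; as `τ` is conjugate to `τ ^ p`, its order is prime to `p`, hence divides
`u ∣ a`. Thus `⟨x₀, τ⟩ ∈ W`, and `x₀ ^ σ ∈ W` forces `x₀ ∈ W`.
-/

open Finset

lemma IsPrimitiveRoot.sum_range_pow_sub_eq_zero {R : Type*} [CommRing R] [IsDomain R] {ζ : R}
    {k : ℕ} (hζ : IsPrimitiveRoot ζ k) (hk : 1 < k) : ∑ i ∈ range k, ζ ^ (k - i) = 0 := calc
  ∑ i ∈ range k, ζ ^ (k - i) = ∑ i ∈ range k, ζ ^ (k - 1 - i + 1) :=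
    sum_congr rfl fun i hi => by rw [mem_range] at hi; congr 1; omega
  _ = ζ * ∑ i ∈ range k, ζ ^ i := by
    rw [sum_range_reflect (fun i => ζ ^ (i + 1)), mul_sum]; simp only [pow_succ']
  _ = 0 := by rw [hζ.geom_sum_eq_zero hk, mul_zero]

lemma prime_dvd_sum_range_pow_sub {p : ℕ} [Fact p.Prime] (hodd : Odd p) {h : ℤ}
    (hord : orderOf (h : ZMod p) = p - 1) : (p : ℤ) ∣ ∑ i ∈ range (p - 1), h ^ (p - 1 - i) := by
  have hp1 : 1 < p - 1 := by
    have := (Fact.out : p.Prime).two_le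
    rcases hodd with ⟨k, rfl⟩
    omega
  rw [← ZMod.intCast_zmod_eq_zero_iff_dvd]
  push_cast
  exact (hord ▸ IsPrimitiveRoot.orderOf (h : ZMod p)).sum_range_pow_sub_eq_zero hp1

section OrderOf

variable {G : Type*}

lemma coprime_orderOf_of_orderOf_pow_eq [Monoid G] {x : G} (hx : IsOfFinOrder x) {n : ℕ}
    (hn : n ≠ 0) (h : orderOf (x ^ n) = orderOf x) : (orderOf x).Coprime n := by
  rw [orderOf_pow' x hn, Nat.div_eq_self] at h
  exact h.resolve_left hx.orderOf_pos.ne'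

variable [Group G]

lemma coprime_orderOf_of_conj_eq_pow [Finite G] {σ τ : G} {n : ℕ} (hn : n ≠ 0)
    (h : σ⁻¹ * τ * σ = τ ^ n) : (orderOf τ).Coprime n := by
  refine coprime_orderOf_of_orderOf_pow_eq (isOfFinOrder_of_finite τ) hn ?_
  rw [← h]
  simpa using MulEquiv.orderOf_eq (MulAut.conj σ⁻¹) τ

lemma zpow_eq_one_of_coprime_orderOf [Finite G] {u m : ℕ} (hcard : Nat.card G = u * m) {x : G}
    (hx : (orderOf x).Coprime m) {a : ℤ} (ha : (u : ℤ) ∣ a) : x ^ a = 1 := by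
  have hu : orderOf x ∣ u := hx.dvd_of_dvd_mul_right (hcard ▸ orderOf_dvd_natCard x)
  exact orderOf_dvd_iff_zpow_eq_one.mp ((Int.natCast_dvd_natCast.mpr hu).trans ha)

end OrderOf

section TameBracket

variable {G : Type*} [Group G]

lemma Commute.list_prod_map_zpow_mul {ι : Type*} {x y : G} (hxy : Commute x y) (f : ι → ℤ)
    (l : List ι) : (l.map fun i => x ^ f i * y).prod = x ^ (l.map f).sum * y ^ l.length := by
  induction l with
  | nil => simp
  | cons i l ih =>
    rw [List.map_cons, List.prod_cons, ih, List.map_cons, List.sum_cons, List.length_cons,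
      zpow_add, pow_succ']
    rw [mul_assoc, ← mul_assoc y, (hxy.zpow_left _).symm.eq]
    simp only [mul_assoc]

lemma map_tameBracket {H : Type*} [Group H] (f : G →* H) (p : ℕ) (h a : ℤ) (x y : G) :
    f (tameBracket p h a x y) = tameBracket p h a (f x) (f y) := by
  simp [tameBracket, map_list_prod, Function.comp_def]

lemma tameBracket_eq_one {p : ℕ} {h a : ℤ} {x y : G} (hxy : Commute x y) (hx : x ^ p = 1)
    (hy : y ^ a = 1) (hS : (p : ℤ) ∣ ∑ i ∈ range (p - 1), h ^ (p - 1 - i)) :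
    tameBracket p h a x y = 1 := by
  obtain ⟨k, hk⟩ := hS
  rw [tameBracket, hxy.list_prod_map_zpow_mul, List.length_range,
    ((hxy.zpow_left _).pow_right _).mul_zpow]
  have hsum : ((List.range (p - 1)).map fun i => h ^ (p - 1 - i)).sum = p * k := hk
  rw [hsum, ← zpow_mul, mul_assoc, zpow_mul, zpow_natCast, hx, one_zpow, one_mul,
    ← zpow_natCast, ← zpow_mul, mul_comm, zpow_mul, hy, one_zpow]

lemma tameBracket_mem_of_normal (N : Subgroup G) [N.Normal] {p : ℕ} {h a : ℤ} {x y : G}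
    (hxy : y⁻¹ * x * y * x⁻¹ ∈ N) (hx : x ^ p ∈ N) (hy : y ^ a = 1)
    (hS : (p : ℤ) ∣ ∑ i ∈ range (p - 1), h ^ (p - 1 - i)) : tameBracket p h a x y ∈ N := by
  rw [← QuotientGroup.eq_one_iff, ← QuotientGroup.mk'_apply, map_tameBracket]
  refine tameBracket_eq_one ?_ ?_ ?_ hS
  · rw [← QuotientGroup.eq_one_iff] at hxy
    exact (Commute.inv_left_iff.mp (commutatorElement_eq_one_iff_commute.mp
      (by simpa [commutatorElement_def] using hxy))).symm
  · rwa [← map_pow, QuotientGroup.mk'_apply, QuotientGroup.eq_one_iff]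
  · rw [← map_zpow, hy, map_one]

end TameBracket

lemma pow_mem_pFrattini {p : ℕ} {G : Type*} [Group G] {v : G} (hv : v ∈ pCore p G) :
    v ^ p ∈ pFrattini p G :=
  Subgroup.mem_sup_left (Subgroup.subset_closure ⟨v, hv, rfl⟩)

theorem xConstrained_of_tameDecoupled_general (p : ℕ) [Fact p.Prime] (hodd : Odd p)
    (G : Type*) [Group G] [Finite G] (u r : ℕ)
    (hcard : Nat.card G = u * p ^ r)
    (h a : ℤ)
    (ha0 : a ≡ 0 [ZMOD (u : ℤ)])
    (hord : orderOf (h : ZMod p) = p - 1)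
    (htd : IsTameDecoupled p G) :
    IsXConstrained p h a G := by
  intro σ τ hστ x₀ hx₀ hW
  have hτ : τ ^ a = 1 := zpow_eq_one_of_coprime_orderOf hcard
    ((coprime_orderOf_of_conj_eq_pow (Fact.out : p.Prime).ne_zero hστ.1).pow_right r)
    (Int.modEq_zero_iff_dvd.mp ha0)
  have hB : tameBracket p h a x₀ τ ∈ pFrattini p G :=
    tameBracket_mem_of_normal _ (htd σ τ hστ x₀ hx₀) (pow_mem_pFrattini hx₀) hτ
      (prime_dvd_sum_range_pow_sub hodd hord)
  have hconj : σ⁻¹ * x₀ * σ ∈ pFrattini p G :=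
    (Subgroup.mul_mem_cancel_right _ (Subgroup.inv_mem _ hB)).mp hW
  simpa [mul_assoc] using (pFrattini_normal p G).conj_mem _ hconj σ

/-- If `G` is tame-decoupled then `G` is `x₀`-constrained. -/
theorem xConstrained_of_tameDecoupled (p : ℕ) [Fact p.Prime] (hodd : Odd p)
    (G : Type*) [Group G] [Finite G] (u r : ℕ)
    (hcard : Nat.card G = u * p ^ r) (hu : ¬ p ∣ u)
    (h a : ℤ)
    (ha0 : a ≡ 0 [ZMOD (u : ℤ)])
    (ha1 : ((p : ℤ) - 1) * a ≡ 1 [ZMOD ((p : ℤ) ^ r)])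
    (hh : h ^ (p - 1) ≡ 1 [ZMOD ((p : ℤ) ^ r)])
    (hord : orderOf (h : ZMod p) = p - 1)
    (htd : IsTameDecoupled p G) :
    IsXConstrained p h a G :=
  xConstrained_of_tameDecoupled_general p hodd G u r hcard h a ha0 hord htd
end

section
/- Let p be an odd prime. Any quotient of a potentially p-realizable finite group is potentially p-realizable: if G admits a tame structure and N is a normal subgroup of G, then G/N admits a tame structure. More precisely, if G ⊇ G₀ ⊇ G₁ is a tame structure on G, then G/N ⊇ G₀N/N ⊇ G₁N/N is a tame structure on G/N. -/
/-- A tame structure `G ⊇ G₀ ⊇ G₁` on a group `G`. -/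
def IsTameStructure (p : ℕ) {G : Type*} [Group G] (G₀ G₁ : Subgroup G) : Prop :=
  G₁ ≤ G₀ ∧ G₀.Normal ∧ G₁.Normal ∧ IsPGroup p G₁ ∧
    Nat.Coprime (G₁.relIndex G₀) p ∧
    ∃ σ τ : G, τ ∈ G₀ ∧ σ⁻¹ * τ * σ = τ ^ p ∧
      Subgroup.closure {σ} ⊔ G₀ = ⊤ ∧
      G₀ ≤ Subgroup.closure {τ} ⊔ G₁

/-- `G` is potentially `p`-realizable if it admits a tame structure. -/
def IsPotentiallyPRealizable (p : ℕ) (G : Type*) [Group G] : Prop :=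
  ∃ G₀ G₁ : Subgroup G, IsTameStructure p G₀ G₁

theorem Subgroup.relIndex_map_map_dvd {G G' : Type*} [Group G] [Group G'] (f : G →* G')
    (H K : Subgroup G) : (H.map f).relIndex (K.map f) ∣ H.relIndex K := by
  rw [← relIndex_comap, comap_map_eq]
  exact relIndex_dvd_of_le_left K le_sup_left

theorem Subgroup.map_closure_singleton_sup {G G' : Type*} [Group G] [Group G'] (f : G →* G')
    (g : G) (H : Subgroup G) : (closure {g} ⊔ H).map f = closure {f g} ⊔ H.map f := by
  rw [map_sup, MonoidHom.map_closure, Set.image_singleton]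

theorem IsTameStructure.map {p : ℕ} {G H : Type*} [Group G] [Group H] {G₀ G₁ : Subgroup G}
    (h : IsTameStructure p G₀ G₁) {f : G →* H} (hf : Function.Surjective f) :
    IsTameStructure p (G₀.map f) (G₁.map f) := by
  obtain ⟨h₁₀, hG₀, hG₁, hp, hcop, σ, τ, hτ, hconj, hσ, hτG₀⟩ := h
  refine ⟨Subgroup.map_mono h₁₀, hG₀.map f hf, hG₁.map f hf, hp.map f,
    hcop.coprime_dvd_left (Subgroup.relIndex_map_map_dvd f G₁ G₀),
    f σ, f τ, Subgroup.mem_map_of_mem f hτ, ?_, ?_, ?_⟩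
  · rw [← map_inv, ← map_mul, ← map_mul, hconj, map_pow]
  · rw [← Subgroup.map_closure_singleton_sup, hσ, Subgroup.map_top_of_surjective f hf]
  · exact (Subgroup.map_mono hτG₀).trans (Subgroup.map_closure_singleton_sup f τ G₁).le

theorem quotient_of_potentially_realizable_general (p : ℕ)
    (G : Type*) [Group G] (G₀ G₁ : Subgroup G)
    (h : IsTameStructure p G₀ G₁) (N : Subgroup G) [N.Normal] :
    IsTameStructure p (G₀.map (QuotientGroup.mk' N)) (G₁.map (QuotientGroup.mk' N)) ∧
      IsPotentiallyPRealizable p (G ⧸ N) :=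
  have hN := h.map (QuotientGroup.mk'_surjective N)
  ⟨hN, _, _, hN⟩

/-- Any quotient of a potentially `p`-realizable group is potentially `p`-realizable;
more precisely, the images of a tame structure form a tame structure on the quotient. -/
theorem quotient_of_potentially_realizable (p : ℕ) (hp : p.Prime) (hodd : Odd p)
    (G : Type*) [Group G] [Finite G] (G₀ G₁ : Subgroup G)
    (h : IsTameStructure p G₀ G₁) (N : Subgroup G) [N.Normal] :
    IsTameStructure p (G₀.map (QuotientGroup.mk' N)) (G₁.map (QuotientGroup.mk' N)) ∧
      IsPotentiallyPRealizable p (G ⧸ N) :=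
  quotient_of_potentially_realizable_general p G G₀ G₁ h N
end

section
/- Let p be an odd prime, G a finite group with p-core V, and suppose G ⊇ G₀ ⊇ G₁ is a tame structure on G. Then G ⊇ G₀V ⊇ V is also a tame structure on G. -/
open scoped Pointwise

theorem IsPGroup.le_pCore {p : ℕ} {G : Type*} [Group G] {N : Subgroup G} [N.Normal]
    (hN : IsPGroup p N) : N ≤ pCore p G :=
  le_iInf hN.le_sylow_of_normal

theorem isPGroup_pCore (p : ℕ) (G : Type*) [Group G] : IsPGroup p (pCore p G) :=
  let P : Sylow p G := Classical.arbitrary _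
  P.isPGroup'.to_le (iInf_le _ P)

namespace IsTameStructure

variable {p : ℕ} {G : Type*} [Group G] {G₀ G₁ : Subgroup G}

theorem le_pCore (h : IsTameStructure p G₀ G₁) : G₁ ≤ pCore p G :=
  have _ : G₁.Normal := h.2.2.1
  h.2.2.2.1.le_pCore

theorem sup_of_le {N : Subgroup G} [N.Normal] (h : IsTameStructure p G₀ G₁)
    (hN : IsPGroup p N) (hG₁N : G₁ ≤ N) : IsTameStructure p (G₀ ⊔ N) N := by
  obtain ⟨-, hG₀, -, -, hcop, σ, τ, hτ, hστ, hσ, hτG₀⟩ := h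
  refine ⟨le_sup_right, Subgroup.sup_normal G₀ N, ‹_›, hN, ?_, σ, τ,
    Subgroup.mem_sup_left hτ, hστ, ?_, ?_⟩
  -- `(G₀ ⊔ N) / N ≃ G₀ / (G₀ ⊓ N)`, whose order divides `|G₀ / G₁|` as `G₁ ≤ G₀ ⊓ N`
  · rw [Subgroup.relIndex_sup_right]
    exact hcop.coprime_dvd_left (Subgroup.relIndex_dvd_of_le_left G₀ hG₁N)
  · exact top_unique (hσ ▸ sup_le_sup_left le_sup_left _)
  · exact sup_le (hτG₀.trans (sup_le_sup_left hG₁N _)) le_sup_right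

end IsTameStructure

theorem tameStructure_sup_pCore_general (p : ℕ)
    (G : Type*) [Group G] (G₀ G₁ : Subgroup G)
    (h : IsTameStructure p G₀ G₁) :
    IsTameStructure p (G₀ ⊔ pCore p G) (pCore p G) :=
  h.sup_of_le (isPGroup_pCore p G) h.le_pCore

/-- If `G ⊇ G₀ ⊇ G₁` is a tame structure on `G`, so is `G ⊇ G₀V ⊇ V`,
where `V` is the `p`-core of `G`. -/
theorem tameStructure_sup_pCore (p : ℕ) (hp : p.Prime) (hodd : Odd p)
    (G : Type*) [Group G] [Finite G] (G₀ G₁ : Subgroup G)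
    (h : IsTameStructure p G₀ G₁) :
    IsTameStructure p (G₀ ⊔ pCore p G) (pCore p G) :=
  tameStructure_sup_pCore_general p G G₀ G₁ h
end
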